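/- Suppose μ is φ-mixing with Σ_{i=1}^∞ φ(i) < ∞, and suppose there exists r > 0 such that μ(A) ≤ e^{−rn} for every n ∈ ℕ and every n-cylinder A ∈ 𝒜ⁿ. Then for every ε > 0 one has Σ_{n=1}^∞ ∫_Ω F_z^n(e^{nε}) dμ(z) < ∞. -/

import Mathlib

open MeasureTheory Filter Set

variable {Ω : Type*} [MeasurableSpace Ω]

/-- The `n`-cylinder containing `x`, for the countable measurable partition given by the
symbol map `P` and its joins under the dynamics `T`. -/
def cylAt (T : Ω → Ω) (P : Ω → ℕ) (n : ℕ) (x : Ω) : Set Ω :=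
  {y | ∀ i < n, P (T^[i] y) = P (T^[i] x)}

/-- The `n`-cylinder determined by a word `w` of length `n`. -/
def cylW (T : Ω → Ω) (P : Ω → ℕ) (n : ℕ) (w : Fin n → ℕ) : Set Ω :=
  {y | ∀ i : Fin n, P (T^[(i : ℕ)] y) = w i}

/-- The collection of all cylinder sets (elements of all the joins `𝒜ⁿ`). -/
def cylSets (T : Ω → Ω) (P : Ω → ℕ) : Set (Set Ω) :=
  {A | ∃ n, ∃ w : Fin n → ℕ, A = cylW T P n w}

/-- The partition is generating: every measurable set agrees mod `μ`-null sets with a set in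
the σ-algebra generated by the cylinders. -/
def GeneratingPartition (T : Ω → Ω) (P : Ω → ℕ) (μ : Measure Ω) : Prop :=
  ∀ s : Set Ω, MeasurableSet s →
    ∃ t : Set Ω, MeasurableSet[MeasurableSpace.generateFrom (cylSets T P)] t ∧
      μ (symmDiff s t) = 0

/-- First entrance time `τ_A(x) = min {i ≥ 1 : T^i x ∈ A}` (junk value `0` if the orbit
never enters `A`). -/
noncomputable def hitTime (T : Ω → Ω) (A : Set Ω) (x : Ω) : ℕ :=
  sInf {i | 1 ≤ i ∧ T^[i] x ∈ A}

/-- The Shannon–McMillan–Breiman property with constant `h`: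
`-(1/n) log μ(A_n(x)) → h` for `μ`-a.e. `x`. -/
def SMB (T : Ω → Ω) (P : Ω → ℕ) (μ : Measure Ω) (h : ℝ) : Prop :=
  ∀ᵐ x ∂μ, Tendsto (fun n : ℕ => -Real.log ((μ (cylAt T P n x)).toReal) / n)
    atTop (nhds h)

/-- The entrance-time distribution `F_z^n(t) = μ {x : τ_{A_n(z)}(x) ≥ t / μ(A_n(z))}`. -/
noncomputable def Fdist (T : Ω → Ω) (P : Ω → ℕ) (μ : Measure Ω) (z : Ω) (n : ℕ)
    (t : ℝ) : ℝ :=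
  (μ {x | t / (μ (cylAt T P n z)).toReal ≤ (hitTime T (cylAt T P n z) x : ℝ)}).toReal

/-- `μ` is `φ`-mixing: `|μ(A ∩ T^{-(n+i)}B) - μ(A)μ(B)| ≤ φ(i) μ(A)` for every `n`-cylinder
`A` and every `B` in the σ-algebra generated by all cylinders, with `φ` decreasing. -/
def PhiMixing (T : Ω → Ω) (P : Ω → ℕ) (μ : Measure Ω) (φ : ℕ → ℝ) : Prop :=
  Antitone φ ∧
  ∀ (n i : ℕ) (w : Fin n → ℕ) (B : Set Ω),
    MeasurableSet[MeasurableSpace.generateFrom (cylSets T P)] B →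
    |(μ (cylW T P n w ∩ T^[n + i] ⁻¹' B)).toReal -
        (μ (cylW T P n w)).toReal * (μ B).toReal| ≤
      φ i * (μ (cylW T P n w)).toReal

/-- The partition `{P = j}_j` has an exponentially decaying tail:
`μ(∪_{i ≥ j} 𝒫_i) ≤ c δ^j` for some `c > 0` and `0 ≤ δ < 1`. -/
def ExpTail (P : Ω → ℕ) (μ : Measure Ω) : Prop :=
  ∃ c > (0 : ℝ), ∃ δ : ℝ, 0 ≤ δ ∧ δ < 1 ∧
    ∀ j : ℕ, (μ {x | j ≤ P x}).toReal ≤ c * δ ^ j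

/-- `Z_n(s) = Σ_{A ∈ 𝒜ⁿ} μ(A)^{1+s}`. -/
noncomputable def Zfun (T : Ω → Ω) (P : Ω → ℕ) (μ : Measure Ω) (n : ℕ) (s : ℝ) : ℝ :=
  ∑' w : Fin n → ℕ, (μ (cylW T P n w)).toReal ^ (1 + s)

/-- `W_n^s(x,z) = Σ_{i=1}^{τ_{A_n(z)}(x)} μ(A_n(T^i x))^s`. -/
noncomputable def W (T : Ω → Ω) (P : Ω → ℕ) (μ : Measure Ω) (s : ℝ) (n : ℕ)
    (x z : Ω) : ℝ :=
  ∑ i ∈ Finset.Icc 1 (hitTime T (cylAt T P n z) x),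
    (μ (cylAt T P n (T^[i] x))).toReal ^ s

/-- The hitting number `N_{U,M}(x) = Σ_{i=0}^M χ_U(T^i x)`. -/
noncomputable def hitNum (T : Ω → Ω) (U : Set Ω) (M : ℕ) (x : Ω) : ℕ :=
  ∑ i ∈ Finset.range (M + 1), U.indicator (fun _ => 1) (T^[i] x)

/-- `U` is a union of `n`-cylinders (i.e. `U ∈ σ(𝒜ⁿ)`). -/
def UnionOfCyl (T : Ω → Ω) (P : Ω → ℕ) (n : ℕ) (U : Set Ω) : Prop :=
  ∃ S : Set (Fin n → ℕ), U = ⋃ w ∈ S, cylW T P n w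

lemma cylAt_eq_cylW (T : Ω → Ω) (P : Ω → ℕ) (n : ℕ) (z : Ω) :
    cylAt T P n z = cylW T P n (fun i => P (T^[(i:ℕ)] z)) := by
  ext y
  constructor
  · intro h i; exact h i i.isLt
  · intro h i hi; exact h ⟨i, hi⟩

lemma measurableSet_cylW (T : Ω → Ω) (hT : Measurable T) (P : Ω → ℕ) (hP : Measurable P)
    (n : ℕ) (w : Fin n → ℕ) : MeasurableSet (cylW T P n w) := by
  have : cylW T P n w = ⋂ i : Fin n, (fun y => P (T^[(i:ℕ)] y)) ⁻¹' {w i} := by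
    ext y; simp [cylW, Set.mem_iInter]
  rw [this]
  exact MeasurableSet.iInter fun i => (hP.comp (hT.iterate i)) (measurableSet_singleton _)

lemma phi_nonneg {φ : ℕ → ℝ} (hmono : Antitone φ) (hsum : Summable φ) (i : ℕ) : 0 ≤ φ i :=
  le_of_tendsto hsum.tendsto_atTop_zero
    (eventually_atTop.2 ⟨i, fun j hj => hmono hj⟩)



noncomputable def psi (φ : ℕ → ℝ) (n k : ℕ) : ℝ := if k < n then 1 else φ (k - n)

lemma psi_nonneg {φ : ℕ → ℝ} (hφ : ∀ i, 0 ≤ φ i) (n k : ℕ) : 0 ≤ psi φ n k := by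
  unfold psi; split
  · norm_num
  · exact hφ _

lemma psi_sum_le {φ : ℕ → ℝ} (hφ : ∀ i, 0 ≤ φ i) (hsum : Summable φ) (n M : ℕ) :
    ∑ k ∈ Finset.range M, psi φ n k ≤ (n : ℝ) + ∑' i, φ i := by
  have hΦ : 0 ≤ ∑' i, φ i := tsum_nonneg hφ
  rcases le_or_gt M n with h | h
  · have he : ∀ k ∈ Finset.range M, psi φ n k = (1:ℝ) := by
      intro k hk
      have := Finset.mem_range.mp hk
      unfold psi; rw [if_pos (by omega)]
    rw [Finset.sum_congr rfl he, Finset.sum_const, Finset.card_range, nsmul_eq_mul, mul_one]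
    have : (M:ℝ) ≤ n := by exact_mod_cast h
    linarith
  · rw [Finset.range_eq_Ico, ← Finset.sum_Ico_consecutive _ (Nat.zero_le n) h.le]
    have h1 : ∑ k ∈ Finset.Ico 0 n, psi φ n k = (n : ℝ) := by
      rw [← Finset.range_eq_Ico]
      have he : ∀ k ∈ Finset.range n, psi φ n k = (1:ℝ) := fun k hk => by
        unfold psi; rw [if_pos (Finset.mem_range.mp hk)]
      rw [Finset.sum_congr rfl he, Finset.sum_const, Finset.card_range, nsmul_eq_mul, mul_one]
    have h2 : ∑ k ∈ Finset.Ico n M, psi φ n k ≤ ∑' i, φ i := by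
      rw [Finset.sum_Ico_eq_sum_range]
      calc ∑ i ∈ Finset.range (M - n), psi φ n (n + i)
          = ∑ i ∈ Finset.range (M - n), φ i := by
            refine Finset.sum_congr rfl fun i _ => ?_
            unfold psi; rw [if_neg (by omega)]; congr 1; omega
        _ ≤ ∑' i, φ i := Summable.sum_le_tsum _ (fun i _ => hφ i) hsum
    linarith

lemma inner_sum_le {φ : ℕ → ℝ} (hφ : ∀ i, 0 ≤ φ i) (hsum : Summable φ) (n m i : ℕ)
    (hi : i ≤ m) :
    ∑ j ∈ Finset.Icc 1 m, psi φ n (Nat.dist i j) ≤ 2 * ((n : ℝ) + ∑' i, φ i) := by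
  have key : ∀ (s : Finset ℕ) (g : ℕ → ℕ), (∀ j ∈ s, g j ≤ m) →
      (∀ j₁ ∈ s, ∀ j₂ ∈ s, g j₁ = g j₂ → j₁ = j₂) →
      ∑ j ∈ s, psi φ n (g j) ≤ (n : ℝ) + ∑' i, φ i := by
    intro s g hle hinj
    calc ∑ j ∈ s, psi φ n (g j) = ∑ k ∈ s.image g, psi φ n k :=
          (Finset.sum_image (fun a ha b hb h => hinj a ha b hb h)).symm
      _ ≤ ∑ k ∈ Finset.range (m + 1), psi φ n k := by
          refine Finset.sum_le_sum_of_subset_of_nonneg ?_ (fun k _ _ => psi_nonneg hφ n k)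
          intro k hk
          rcases Finset.mem_image.mp hk with ⟨j, hj, rfl⟩
          exact Finset.mem_range.mpr (Nat.lt_succ_of_le (hle j hj))
      _ ≤ (n : ℝ) + ∑' i, φ i := psi_sum_le hφ hsum n (m + 1)
  rw [← Finset.sum_filter_add_sum_filter_not (Finset.Icc 1 m) (· ≤ i)]
  have b1 := key ((Finset.Icc 1 m).filter (· ≤ i)) (fun j => i - j)
    (fun j hj => by omega) (fun j₁ h₁ j₂ h₂ h => by
      simp only [Finset.mem_filter, Finset.mem_Icc] at h₁ h₂; omega)
  have b2 := key ((Finset.Icc 1 m).filter (fun j => ¬ j ≤ i)) (fun j => j - i)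
    (fun j hj => by simp only [Finset.mem_filter, Finset.mem_Icc] at hj; omega)
    (fun j₁ h₁ j₂ h₂ h => by
      simp only [Finset.mem_filter, Finset.mem_Icc] at h₁ h₂; omega)
  have e1 : ∑ j ∈ (Finset.Icc 1 m).filter (· ≤ i), psi φ n (Nat.dist i j)
      = ∑ j ∈ (Finset.Icc 1 m).filter (· ≤ i), psi φ n (i - j) := by
    refine Finset.sum_congr rfl fun j hj => ?_
    simp only [Finset.mem_filter] at hj
    rw [Nat.dist_comm, Nat.dist_eq_sub_of_le hj.2]
  have e2 : ∑ j ∈ (Finset.Icc 1 m).filter (fun j => ¬ j ≤ i), psi φ n (Nat.dist i j)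
      = ∑ j ∈ (Finset.Icc 1 m).filter (fun j => ¬ j ≤ i), psi φ n (j - i) := by
    refine Finset.sum_congr rfl fun j hj => ?_
    simp only [Finset.mem_filter] at hj
    rw [Nat.dist_eq_sub_of_le (by omega)]
  rw [e1, e2]; linarith

section Core
variable {μ : Measure Ω} [IsProbabilityMeasure μ] {T : Ω → Ω} {P : Ω → ℕ} {φ : ℕ → ℝ}

lemma inter_bound (hφ : PhiMixing T P μ φ) (n : ℕ) (w : Fin n → ℕ) (k : ℕ) :
    (μ (cylW T P n w ∩ T^[k] ⁻¹' (cylW T P n w))).toReal ≤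
      (μ (cylW T P n w)).toReal ^ 2 + (μ (cylW T P n w)).toReal * psi φ n k := by
  set a := (μ (cylW T P n w)).toReal with ha
  have ha0 : 0 ≤ a := ENNReal.toReal_nonneg
  rcases lt_or_ge k n with h | h
  · have h1 : (μ (cylW T P n w ∩ T^[k] ⁻¹' (cylW T P n w))).toReal ≤ a :=
      ENNReal.toReal_mono (measure_ne_top μ _) (measure_mono Set.inter_subset_left)
    have : psi φ n k = 1 := if_pos h
    rw [this]
    nlinarith
  · have hB : MeasurableSet[MeasurableSpace.generateFrom (cylSets T P)] (cylW T P n w) :=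
      MeasurableSpace.measurableSet_generateFrom ⟨n, w, rfl⟩
    have hmix := hφ.2 n (k - n) w _ hB
    rw [Nat.add_sub_cancel' h] at hmix
    have : psi φ n k = φ (k - n) := if_neg (by omega)
    rw [this]
    have := abs_le.mp hmix
    nlinarith [this.2]

lemma pair_meas (hT : MeasurePreserving T μ μ) {A : Set Ω} (hA : MeasurableSet A)
    (i j : ℕ) :
    μ (T^[i] ⁻¹' A ∩ T^[j] ⁻¹' A) = μ (A ∩ T^[Nat.dist i j] ⁻¹' A) := by
  have key : ∀ i j : ℕ, i ≤ j →
      μ (T^[i] ⁻¹' A ∩ T^[j] ⁻¹' A) = μ (A ∩ T^[j - i] ⁻¹' A) := by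
    intro i j hij
    have hset : T^[i] ⁻¹' A ∩ T^[j] ⁻¹' A = T^[i] ⁻¹' (A ∩ T^[j - i] ⁻¹' A) := by
      have hj : ∀ x, T^[j] x = T^[j - i] (T^[i] x) := by
        intro x
        rw [← Function.iterate_add_apply]
        congr 1
        omega
      ext x
      simp only [Set.mem_inter_iff, Set.mem_preimage, hj]
    rw [hset]
    exact (hT.iterate i).measure_preimage
      ((hA.inter ((hT.measurable.iterate _) hA)).nullMeasurableSet)
  rcases le_total i j with h | h
  · rw [key i j h, Nat.dist_eq_sub_of_le h]
  · rw [Set.inter_comm, key j i h, Nat.dist_comm, Nat.dist_eq_sub_of_le h]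

lemma noHit_bound (hT : MeasurePreserving T μ μ) (hP : Measurable P)
    (hφ : PhiMixing T P μ φ) (hφ0 : ∀ i, 0 ≤ φ i) (hφsum : Summable φ)
    (n m : ℕ) (w : Fin n → ℕ) :
    (μ {x | ∀ i ∈ Finset.Icc 1 m, T^[i] x ∉ cylW T P n w}).toReal *
      ((m : ℝ) * (μ (cylW T P n w)).toReal) ^ 2 ≤
      (μ (cylW T P n w)).toReal * m * (2 * ((n : ℝ) + ∑' i, φ i)) := by
  set A := cylW T P n w with hAdef
  have hA : MeasurableSet A := measurableSet_cylW T hT.measurable P hP n w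
  set a := (μ A).toReal with hadef
  have ha0 : 0 ≤ a := ENNReal.toReal_nonneg
  set Φ : ℝ := ∑' i, φ i with hΦdef
  have hΦ0 : 0 ≤ Φ := tsum_nonneg hφ0
  set ind : ℕ → Ω → ℝ := fun i => (T^[i] ⁻¹' A).indicator (fun _ => (1:ℝ)) with hinddef
  set N : Ω → ℝ := fun x => ∑ i ∈ Finset.Icc 1 m, ind i x with hNdef
  have hmeas_i : ∀ i : ℕ, MeasurableSet (T^[i] ⁻¹' A) := fun i => (hT.measurable.iterate i) hA
  have hint : ∀ i, Integrable (ind i) μ := fun i => (integrable_const 1).indicator (hmeas_i i)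
  have hNint : Integrable N μ := integrable_finset_sum _ (fun i _ => hint i)
  have hiint : ∀ i : ℕ, ∫ x, ind i x ∂μ = a := by
    intro i
    rw [hinddef]
    simp only
    rw [integral_indicator_const (1:ℝ) (hmeas_i i), measureReal_def, (hT.iterate i).measure_preimage
      hA.nullMeasurableSet, smul_eq_mul, mul_one]
  have hNmean : ∫ x, N x ∂μ = m * a := by
    rw [hNdef]
    simp only
    rw [integral_finset_sum _ (fun i _ => hint i)]
    simp [hiint, Nat.card_Icc]
  have hprod : ∀ i j : ℕ, (fun x => ind i x * ind j x) =
      (T^[i] ⁻¹' A ∩ T^[j] ⁻¹' A).indicator (fun _ => (1:ℝ)) := by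
    intro i j
    funext x
    by_cases hi : x ∈ T^[i] ⁻¹' A <;> by_cases hj : x ∈ T^[j] ⁻¹' A <;>
      simp [hinddef, Set.indicator_of_mem, Set.indicator_of_notMem, hi, hj,
        Set.mem_inter_iff]
  have hpint : ∀ i j : ℕ, Integrable (fun x => ind i x * ind j x) μ := by
    intro i j
    rw [hprod i j]
    exact (integrable_const 1).indicator ((hmeas_i i).inter (hmeas_i j))
  have hppint : ∀ i j : ℕ, ∫ x, ind i x * ind j x ∂μ =
      (μ (T^[i] ⁻¹' A ∩ T^[j] ⁻¹' A)).toReal := by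
    intro i j
    rw [hprod i j, integral_indicator_const (1:ℝ) ((hmeas_i i).inter (hmeas_i j)), measureReal_def,
      smul_eq_mul, mul_one]
  have hNsq : (fun x => N x ^ 2) =
      fun x => ∑ i ∈ Finset.Icc 1 m, ∑ j ∈ Finset.Icc 1 m, ind i x * ind j x := by
    funext x
    rw [hNdef]
    simp only
    rw [sq, Finset.sum_mul_sum]
  have hN2int : Integrable (fun x => N x ^ 2) μ := by
    rw [hNsq]
    exact integrable_finset_sum _ (fun i _ => integrable_finset_sum _ (fun j _ => hpint i j))
  have hN2val : ∫ x, N x ^ 2 ∂μ =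
      ∑ i ∈ Finset.Icc 1 m, ∑ j ∈ Finset.Icc 1 m,
        (μ (T^[i] ⁻¹' A ∩ T^[j] ⁻¹' A)).toReal := by
    rw [hNsq, integral_finset_sum _ (fun i _ => integrable_finset_sum _ (fun j _ => hpint i j))]
    exact Finset.sum_congr rfl fun i _ => by
      rw [integral_finset_sum _ (fun j _ => hpint i j)]
      exact Finset.sum_congr rfl fun j _ => hppint i j
  have hN2bound : ∫ x, N x ^ 2 ∂μ ≤ (m:ℝ)^2 * a^2 + a * m * (2 * ((n:ℝ) + Φ)) := by
    rw [hN2val]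
    have hpair : ∀ i ∈ Finset.Icc 1 m, ∀ j ∈ Finset.Icc 1 m,
        (μ (T^[i] ⁻¹' A ∩ T^[j] ⁻¹' A)).toReal ≤ a^2 + a * psi φ n (Nat.dist i j) := by
      intro i _ j _
      rw [pair_meas hT hA i j]
      exact inter_bound hφ n w (Nat.dist i j)
    calc ∑ i ∈ Finset.Icc 1 m, ∑ j ∈ Finset.Icc 1 m, (μ (T^[i] ⁻¹' A ∩ T^[j] ⁻¹' A)).toReal
        ≤ ∑ i ∈ Finset.Icc 1 m, ∑ j ∈ Finset.Icc 1 m, (a^2 + a * psi φ n (Nat.dist i j)) :=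
          Finset.sum_le_sum fun i hi => Finset.sum_le_sum fun j hj => hpair i hi j hj
      _ = ∑ i ∈ Finset.Icc 1 m, ((m:ℝ) * a^2 + a * ∑ j ∈ Finset.Icc 1 m, psi φ n (Nat.dist i j)) := by
          refine Finset.sum_congr rfl fun i _ => ?_
          rw [Finset.sum_add_distrib, Finset.sum_const, Nat.card_Icc, ← Finset.mul_sum]
          simp [nsmul_eq_mul]
      _ ≤ ∑ i ∈ Finset.Icc 1 m, ((m:ℝ) * a^2 + a * (2 * ((n:ℝ) + Φ))) := by
          refine Finset.sum_le_sum fun i hi => ?_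
          have hi' : i ≤ m := (Finset.mem_Icc.mp hi).2
          have := inner_sum_le hφ0 hφsum n m i hi'
          nlinarith
      _ = (m:ℝ) * ((m:ℝ) * a^2 + a * (2 * ((n:ℝ) + Φ))) := by
          rw [Finset.sum_const, Nat.card_Icc]
          simp [nsmul_eq_mul]
          ring
      _ = (m:ℝ)^2 * a^2 + a * m * (2 * ((n:ℝ) + Φ)) := by ring
  -- deviation function
  set c : ℝ := (m:ℝ) * a with hcdef
  have hdev_eq : (fun x => (N x - c)^2) = fun x => (N x ^ 2 - 2*c*N x + c^2) :=
    funext fun x => by ring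
  have hdevint : Integrable (fun x => (N x - c)^2) μ := by
    rw [hdev_eq]
    exact (hN2int.sub ((hNint.const_mul (2*c)))).add (integrable_const _)
  have hdevval : ∫ x, (N x - c)^2 ∂μ = (∫ x, N x ^ 2 ∂μ) - c^2 := by
    have hsub : Integrable (fun x => N x ^ 2 - 2*c*N x) μ :=
      hN2int.sub (hNint.const_mul (2*c))
    rw [hdev_eq, integral_add hsub (integrable_const _),
      integral_sub hN2int (hNint.const_mul (2*c)), integral_const_mul, hNmean,
      integral_const]
    simp only [measureReal_def, measure_univ, ENNReal.toReal_one, smul_eq_mul, one_mul]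
    ring
  -- Chebyshev
  set S : Set Ω := {x | ∀ i ∈ Finset.Icc 1 m, T^[i] x ∉ A} with hSdef
  have hSmeas : MeasurableSet S := by
    have : S = ⋂ i ∈ Finset.Icc 1 m, (T^[i] ⁻¹' A)ᶜ := by
      ext x; simp [hSdef, Set.mem_iInter]
    rw [this]
    exact MeasurableSet.biInter (Finset.Icc 1 m).countable_toSet
      (fun i _ => (hmeas_i i).compl)
  have hSN : ∀ x ∈ S, N x = 0 := by
    intro x hx
    rw [hNdef]
    simp only
    refine Finset.sum_eq_zero fun i hi => ?_
    show (T^[i] ⁻¹' A).indicator (fun _ => (1:ℝ)) x = 0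
    exact Set.indicator_apply_eq_zero.mpr (fun h => absurd (Set.mem_preimage.mp h) (hx i hi))
  have cheb : (μ S).toReal * c^2 ≤ ∫ x, (N x - c)^2 ∂μ := by
    have h1 : (μ S).toReal * c^2 = ∫ x in S, c^2 ∂μ := by
      rw [setIntegral_const, measureReal_def, smul_eq_mul]
    have h2 : ∫ x in S, c^2 ∂μ = ∫ x in S, (N x - c)^2 ∂μ := by
      refine (setIntegral_congr_fun hSmeas fun x hx => ?_).symm
      rw [hSN x hx]
      ring
    have h3 : ∫ x in S, (N x - c)^2 ∂μ ≤ ∫ x, (N x - c)^2 ∂μ :=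
      setIntegral_le_integral hdevint (Filter.Eventually.of_forall fun x => sq_nonneg _)
    rw [h1, h2]
    exact h3
  calc (μ S).toReal * ((m:ℝ) * a)^2 = (μ S).toReal * c^2 := by rw [hcdef]
    _ ≤ ∫ x, (N x - c)^2 ∂μ := cheb
    _ = (∫ x, N x ^ 2 ∂μ) - c^2 := hdevval
    _ ≤ ((m:ℝ)^2 * a^2 + a * m * (2 * ((n:ℝ) + Φ))) - c^2 := by linarith
    _ = a * m * (2 * ((n:ℝ) + Φ)) := by rw [hcdef]; ring

end Core

lemma summable_bound (Φ ε : ℝ) (hε : 0 < ε) :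
    Summable (fun n : ℕ => 4 * ((n : ℝ) + Φ) * Real.exp (-((n:ℝ) * ε))) := by
  have hr : ‖Real.exp (-ε)‖ < 1 := by
    rw [Real.norm_eq_abs, abs_of_pos (Real.exp_pos _)]
    exact Real.exp_lt_one_iff.mpr (by linarith)
  have hrepr : ∀ n : ℕ, Real.exp (-((n:ℝ) * ε)) = Real.exp (-ε) ^ n := by
    intro n
    rw [← Real.exp_nat_mul]
    congr 1
    ring
  have h1 : Summable (fun n : ℕ => 4 * ((n:ℝ) * Real.exp (-ε) ^ n)) :=
    ((summable_pow_mul_geometric_of_norm_lt_one 1 hr).congr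
      (fun n => by rw [pow_one])).mul_left 4
  have h2 : Summable (fun n : ℕ => (4 * Φ) * Real.exp (-ε) ^ n) :=
    (summable_geometric_of_norm_lt_one hr).mul_left _
  refine ((h1.add h2).congr fun n => ?_)
  rw [hrepr n]
  ring

theorem phiMixing_summable_Fdist_integral'
    (μ : Measure Ω) [IsProbabilityMeasure μ] (T : Ω → Ω) (P : Ω → ℕ)
    (hP : Measurable P) (hT : MeasurePreserving T μ μ)
    (φ : ℕ → ℝ) (hφ : PhiMixing T P μ φ) (hφsum : Summable φ) :
    ∀ ε > (0 : ℝ),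
      Summable (fun n : ℕ => ∫ z,
        (μ {x | Real.exp ((n:ℝ) * ε) / (μ (cylAt T P n z)).toReal ≤
          (hitTime T (cylAt T P n z) x : ℝ)}).toReal ∂μ) := by
  intro ε hε
  have hφ0 : ∀ i, 0 ≤ φ i := phi_nonneg hφ.1 hφsum
  set Φ : ℝ := ∑' i, φ i with hΦdef
  have hΦ0 : 0 ≤ Φ := tsum_nonneg hφ0
  set f : ℕ → ℝ := fun n => ∫ z,
      (μ {x | Real.exp ((n:ℝ) * ε) / (μ (cylAt T P n z)).toReal ≤
        (hitTime T (cylAt T P n z) x : ℝ)}).toReal ∂μ with hfdef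
  set g : ℕ → ℝ := fun n => 4 * ((n : ℝ) + Φ) * Real.exp (-((n:ℝ) * ε)) with hgdef
  have hg0 : ∀ n, 0 ≤ g n := fun n => by
    have := Real.exp_pos (-((n:ℝ) * ε))
    have : (0:ℝ) ≤ (n:ℝ) + Φ := by positivity
    positivity
  have hf0 : ∀ n, 0 ≤ f n := fun n => integral_nonneg fun z => ENNReal.toReal_nonneg
  -- a.e. positivity of cylinder measure
  have hae : ∀ n : ℕ, ∀ᵐ z ∂μ, 0 < (μ (cylAt T P n z)).toReal := by
    intro n
    have hnull : μ {z | μ (cylAt T P n z) = 0} = 0 := by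
      have hsub : {z | μ (cylAt T P n z) = 0} ⊆
          ⋃ w : {w : Fin n → ℕ // μ (cylW T P n w) = 0}, cylW T P n w.1 := by
        intro z hz
        refine Set.mem_iUnion.mpr ⟨⟨fun i => P (T^[(i:ℕ)] z), ?_⟩, ?_⟩
        · rw [← cylAt_eq_cylW]; exact hz
        · rw [← cylAt_eq_cylW]; intro i _; rfl
      exact measure_mono_null hsub (measure_iUnion_null fun w => w.2)
    filter_upwards [measure_eq_zero_iff_ae_notMem.mp hnull] with z hz
    exact ENNReal.toReal_pos hz (measure_ne_top μ _)
  -- pointwise bound for large n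
  have key : ∀ n : ℕ, 2 ≤ Real.exp ((n:ℝ) * ε) → f n ≤ g n := by
    intro n ht2
    set t : ℝ := Real.exp ((n:ℝ) * ε) with htdef
    have ht0 : 0 < t := Real.exp_pos _
    have hbound : ∀ᵐ z ∂μ,
        ‖(μ {x | t / (μ (cylAt T P n z)).toReal ≤
          (hitTime T (cylAt T P n z) x : ℝ)}).toReal‖ ≤ g n := by
      filter_upwards [hae n] with z ha
      set A : Set Ω := cylAt T P n z with hAdef
      set a : ℝ := (μ A).toReal with hadef
      have ha1 : a ≤ 1 := by
        rw [hadef]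
        calc (μ A).toReal ≤ (1 : ENNReal).toReal :=
              ENNReal.toReal_mono ENNReal.one_ne_top prob_le_one
          _ = 1 := by simp
      set s : ℝ := t / a with hsdef
      have hs2 : 2 ≤ s := by
        rw [hsdef]
        calc (2:ℝ) ≤ t := ht2
          _ ≤ t / a := by
              rw [le_div_iff₀ ha]
              nlinarith
      have hceil2 : 2 ≤ ⌈s⌉₊ := by
        have h1 : (2:ℝ) ≤ (⌈s⌉₊ : ℝ) := le_trans hs2 (Nat.le_ceil s)
        exact_mod_cast h1
      set m : ℕ := ⌈s⌉₊ - 1 with hmdef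
      have hmcast : (m : ℝ) = (⌈s⌉₊ : ℝ) - 1 := by
        rw [hmdef, Nat.cast_sub (by omega)]
        simp
      have hmlt : (m : ℝ) < s := by
        rw [hmcast]
        have := Nat.ceil_lt_add_one (by linarith : (0:ℝ) ≤ s)
        linarith
      have hmge : s - 1 ≤ (m : ℝ) := by
        rw [hmcast]
        have := Nat.ceil_le_floor_add_one s
        have := Nat.le_ceil s
        linarith [Nat.le_ceil s]
      have hma : t / 2 ≤ (m:ℝ) * a := by
        have h1 : (s - 1) * a ≤ (m:ℝ) * a := by nlinarith
        have h2 : (s - 1) * a = t - a := by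
          rw [hsdef]
          field_simp
        nlinarith
      have hma0 : 0 < (m:ℝ) * a := by nlinarith
      -- inclusion into the no-hit set
      have hincl : {x | t / a ≤ (hitTime T A x : ℝ)} ⊆
          {x | ∀ i ∈ Finset.Icc 1 m, T^[i] x ∉ A} := by
        intro x hx
        simp only [Set.mem_setOf_eq] at hx ⊢
        intro i hi hmem
        rcases Finset.mem_Icc.mp hi with ⟨hi1, him⟩
        have hle : hitTime T A x ≤ i := Nat.sInf_le ⟨hi1, hmem⟩
        have : (hitTime T A x : ℝ) ≤ (i : ℝ) := by exact_mod_cast hle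
        have him' : (i : ℝ) ≤ (m : ℝ) := by exact_mod_cast him
        have : s ≤ (m : ℝ) := by
          calc s = t / a := hsdef
            _ ≤ (hitTime T A x : ℝ) := hx
            _ ≤ (i : ℝ) := ‹(hitTime T A x : ℝ) ≤ (i : ℝ)›
            _ ≤ (m : ℝ) := him'
        linarith
      set p : ℝ := (μ {x | ∀ i ∈ Finset.Icc 1 m, T^[i] x ∉ A}).toReal with hpdef
      have hp0 : 0 ≤ p := ENNReal.toReal_nonneg
      have hFp : (μ {x | t / a ≤ (hitTime T A x : ℝ)}).toReal ≤ p :=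
        ENNReal.toReal_mono (measure_ne_top μ _) (measure_mono hincl)
      -- apply the variance bound
      have hvb := noHit_bound hT hP hφ hφ0 hφsum n m (fun i => P (T^[(i:ℕ)] z))
      rw [← cylAt_eq_cylW, ← hAdef, ← hadef, ← hpdef, ← hΦdef] at hvb
      have hC0 : (0:ℝ) ≤ 2 * ((n:ℝ) + Φ) := by positivity
      have hpq : p * ((m:ℝ) * a) ≤ 2 * ((n:ℝ) + Φ) := by nlinarith
      have hpt : p * t ≤ 4 * ((n:ℝ) + Φ) := by nlinarith
      have hpg : p ≤ g n := by
        rw [hgdef]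
        simp only
        rw [show Real.exp (-((n:ℝ)*ε)) = t⁻¹ by rw [htdef, ← Real.exp_neg]]
        rw [le_mul_inv_iff₀ ht0]
        linarith
      rw [Real.norm_eq_abs, abs_of_nonneg ENNReal.toReal_nonneg]
      exact le_trans hFp hpg
    have := norm_integral_le_of_norm_le_const hbound
    rw [hfdef]
    simp only
    calc ∫ z, (μ {x | t / (μ (cylAt T P n z)).toReal ≤
            (hitTime T (cylAt T P n z) x : ℝ)}).toReal ∂μ
        ≤ ‖∫ z, (μ {x | t / (μ (cylAt T P n z)).toReal ≤
            (hitTime T (cylAt T P n z) x : ℝ)}).toReal ∂μ‖ := le_abs_self _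
      _ ≤ g n * (μ Set.univ).toReal := this
      _ = g n := by simp
  -- summability
  set n₀ : ℕ := ⌈1 / ε⌉₊ with hn₀
  have hlarge : ∀ k : ℕ, 2 ≤ Real.exp (((k + n₀ : ℕ):ℝ) * ε) := by
    intro k
    have h1 : (1:ℝ) ≤ (n₀:ℝ) * ε := by
      have := Nat.le_ceil (1 / ε)
      rw [← hn₀] at this
      calc (1:ℝ) = (1/ε) * ε := by field_simp
        _ ≤ (n₀:ℝ) * ε := by nlinarith
    have h2 : (1:ℝ) ≤ ((k + n₀ : ℕ):ℝ) * ε := by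
      push_cast
      nlinarith [Nat.cast_nonneg (α := ℝ) k]
    calc (2:ℝ) = 1 + 1 := by norm_num
      _ ≤ ((k + n₀ : ℕ):ℝ) * ε + 1 := by linarith
      _ ≤ Real.exp (((k + n₀ : ℕ):ℝ) * ε) := Real.add_one_le_exp _
  have hgsum : Summable g := summable_bound Φ ε hε
  have hshift : Summable (fun k : ℕ => f (k + n₀)) := by
    refine Summable.of_nonneg_of_le (fun k => hf0 _) (fun k => key (k + n₀) (hlarge k)) ?_
    exact (summable_nat_add_iff n₀).mpr hgsum
  exact (summable_nat_add_iff n₀).mp hshift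

/-- For `φ`-mixing `μ` with summable `φ` and exponentially small cylinders
(`μ(A) ≤ e^{−rn}` for all `n`-cylinders `A`), `Σ_n ∫ F_z^n(e^{nε}) dμ(z) < ∞`
for every `ε > 0`. -/
theorem phiMixing_summable_Fdist_integral
    (μ : Measure Ω) [IsProbabilityMeasure μ] (T : Ω → Ω) (P : Ω → ℕ)
    (hP : Measurable P) (herg : Ergodic T μ) (hgen : GeneratingPartition T P μ)
    (φ : ℕ → ℝ) (hφ : PhiMixing T P μ φ) (hφsum : Summable φ)
    (hr : ∃ r > (0 : ℝ), ∀ n : ℕ, ∀ w : Fin n → ℕ,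
      (μ (cylW T P n w)).toReal ≤ Real.exp (-(r * n))) :
    ∀ ε > (0 : ℝ),
      Summable (fun n : ℕ => ∫ z, Fdist T P μ z n (Real.exp (n * ε)) ∂μ) := by
  intro ε hε
  exact phiMixing_summable_Fdist_integral' μ T P hP herg.toMeasurePreserving φ hφ hφsum ε hε
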